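/- For every natural number n, the following identity holds in ℚ[x]: B_n^F(x) + F_n·x^{n−1} = ∑_{k=0}^{n} [n choose k]_F · B_{n−k}^F(x) (for n = 0 the term F_n·x^{n−1} is understood as 0 since F_0 = 0). -/

import Mathlib

/-!
Multiplying the coefficient of `z ^ n` in the generating-function identity by `F_n!` gives the
recurrence `∑_{k<n} [n choose k]_F B_k = F_n x^(n-1)`, valid also for `n = 0`. Reflecting the sum
in the theorem via `[n choose n-k]_F = [n choose k]_F` and splitting off its last term
`[n choose n]_F B_n = B_n` leaves exactly this recurrence.
-/

/-- The fibofactorial: `F_n! = F_1 * F_2 * ... * F_n`, with `F_0! = 1`. -/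
def fibFact (n : ℕ) : ℕ := ∏ i ∈ Finset.range n, Nat.fib (i + 1)

/-- The Fibonomial coefficient `[n choose k]_F = F_n! / (F_k! * F_{n-k}!)` as a rational. -/
def fibonomial (n k : ℕ) : ℚ := (fibFact n : ℚ) / ((fibFact k : ℚ) * (fibFact (n - k) : ℚ))

open Polynomial Finset

theorem fibFact_zero : fibFact 0 = 1 := rfl

theorem fibFact_succ (n : ℕ) : fibFact (n + 1) = fibFact n * Nat.fib (n + 1) :=
  prod_range_succ _ n

theorem fibFact_pos (n : ℕ) : 0 < fibFact n :=
  prod_pos fun i _ => Nat.fib_pos.2 i.succ_pos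

theorem fibonomial_symm {n k : ℕ} (hk : k ≤ n) : fibonomial n (n - k) = fibonomial n k := by
  rw [fibonomial, fibonomial, Nat.sub_sub_self hk, mul_comm]

theorem fibonomial_self (n : ℕ) : fibonomial n n = 1 := by
  have hF : (fibFact n : ℚ) ≠ 0 := by exact_mod_cast (fibFact_pos n).ne'
  rw [fibonomial, Nat.sub_self, fibFact_zero, Nat.cast_one, mul_one, div_self hF]

theorem sum_fibonomial_mul_bernoulliFib (B : ℕ → ℚ[X])
    (hB : (PowerSeries.mk fun n => C ((fibFact n : ℚ)⁻¹) * B n) *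
          (PowerSeries.mk fun n => if n = 0 then 0 else C ((fibFact n : ℚ)⁻¹)) =
          PowerSeries.X * PowerSeries.mk (fun n => C ((fibFact n : ℚ)⁻¹) * X ^ n))
    (n : ℕ) :
    ∑ k ∈ range n, C (fibonomial n k) * B k = C (Nat.fib n : ℚ) * X ^ (n - 1) := by
  rcases n with _ | m
  · simp
  have hcoeff := congrArg (PowerSeries.coeff (m + 1)) hB
  rw [PowerSeries.coeff_mul, Nat.sum_antidiagonal_eq_sum_range_succ
    (fun i j => PowerSeries.coeff i _ * PowerSeries.coeff j _), sum_range_succ] at hcoeff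
  simp only [PowerSeries.coeff_mk, PowerSeries.coeff_succ_X_mul, Nat.sub_self, if_true,
    mul_zero, add_zero] at hcoeff
  calc ∑ k ∈ range (m + 1), C (fibonomial (m + 1) k) * B k
      = C (fibFact (m + 1) : ℚ) * ∑ k ∈ range (m + 1),
          C ((fibFact k : ℚ)⁻¹) * B k * C ((fibFact (m + 1 - k) : ℚ)⁻¹) := by
        rw [mul_sum]
        refine sum_congr rfl fun k _ => ?_
        rw [fibonomial, div_eq_mul_inv, mul_inv]
        simp only [map_mul]
        ring
    _ = C (fibFact (m + 1) : ℚ) * ∑ k ∈ range (m + 1),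
          C ((fibFact k : ℚ)⁻¹) * B k *
            if m + 1 - k = 0 then 0 else C ((fibFact (m + 1 - k) : ℚ)⁻¹) := by
        congr 1
        refine sum_congr rfl fun k hk => ?_
        rw [if_neg (Nat.sub_ne_zero_of_lt (mem_range.mp hk))]
    _ = C (Nat.fib (m + 1) : ℚ) * X ^ m := by
        rw [hcoeff, ← mul_assoc, ← map_mul, fibFact_succ]
        have hF : (fibFact m : ℚ) ≠ 0 := by exact_mod_cast (fibFact_pos m).ne'
        push_cast
        rw [mul_comm (fibFact m : ℚ), mul_inv_cancel_right₀ hF]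

/-- For every `n`, `B_n^F(x) + F_n * x^{n-1} = ∑_{k=0}^{n} [n choose k]_F * B_{n-k}^F(x)`
in `ℚ[x]` (for `n = 0` the term `F_n * x^{n-1}` vanishes since `F_0 = 0`). Here `B` is the
(unique) sequence of Bernoulli–Fibonacci polynomials, characterized by the
generating-function identity
`(∑ B_n(x) z^n/F_n!) * (∑_{n≥1} z^n/F_n!) = z * ∑ x^n z^n/F_n!` in `(ℚ[x])⟦z⟧`. -/
theorem bernoulliFib_H_expansion
    (B : ℕ → Polynomial ℚ)
    (hB : (PowerSeries.mk fun n => Polynomial.C ((fibFact n : ℚ)⁻¹) * B n) *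
          (PowerSeries.mk fun n =>
            if n = 0 then 0 else Polynomial.C ((fibFact n : ℚ)⁻¹)) =
          PowerSeries.X *
          PowerSeries.mk (fun n => Polynomial.C ((fibFact n : ℚ)⁻¹) * Polynomial.X ^ n))
    (n : ℕ) :
    B n + Polynomial.C ((Nat.fib n : ℚ)) * Polynomial.X ^ (n - 1) =
      ∑ k ∈ Finset.range (n + 1), Polynomial.C (fibonomial n k) * B (n - k) := by
  have hsymm : ∀ k ∈ range (n + 1), C (fibonomial n (n - k)) * B (n - (n - k)) =
      C (fibonomial n k) * B k := fun k hk => by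
    rw [fibonomial_symm (mem_range_succ_iff.mp hk), Nat.sub_sub_self (mem_range_succ_iff.mp hk)]
  rw [← sum_range_reflect, Nat.add_sub_cancel, sum_congr rfl hsymm, sum_range_succ,
    fibonomial_self, map_one, one_mul, sum_fibonomial_mul_bernoulliFib B hB n, add_comm]
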